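/- Let x = (x_1,…,x_n) be pairwise distinct nonzero complex numbers and z a complex number with |z| < min_{i,j} |x_i x_j^{−1}|^{−1} (so that |z x_α x_β^{−1}| < 1 for all α,β). Define Q(Z; x) = Π_{j=1}^n (1 − Z x_j^{−1}) and 𝔻(z,x) = 𝕍(x)^{−1}·diag(Q(z x_1; x)^{−1},…,Q(z x_n; x)^{−1})·𝕍(x). Then 𝔻(z,x) = Σ_{m=0}^{∞} h_m(x^{−1})·ℙ_m(x)·z^m, an absolutely convergent series, where x^{−1} = (x_1^{−1},…,x_n^{−1}), h_m is the complete homogeneous symmetric polynomial, and ℙ_m(x) = 𝕍(x)^{−1}diag(x_1^m,…,x_n^m)𝕍(x). -/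

import Mathlib

open scoped BigOperators

lemma piGeomSummableReal : ∀ (n : ℕ) (r : Fin n → ℝ), (∀ l, 0 ≤ r l) → (∀ l, r l < 1) →
    Summable (fun c : Fin n → ℕ => ∏ l, r l ^ c l) := by
  intro n
  induction n with
  | zero => intro r _ _; exact summable_of_finite_support (Set.toFinite _)
  | succ n ih =>
    intro r h0 h1
    have hg : Summable (fun m : ℕ => r 0 ^ m) := summable_geometric_of_lt_one (h0 0) (h1 0)
    have hG := ih (fun l => r l.succ) (fun l => h0 _) (fun l => h1 _)
    have := hg.mul_of_nonneg hG (fun m => pow_nonneg (h0 0) m)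
      (fun c => Finset.prod_nonneg fun l _ => pow_nonneg (h0 _) _)
    have key := this.comp_injective ((Fin.consEquiv (fun _ : Fin (n+1) => ℕ)).symm.injective)
    refine key.congr ?_
    intro c
    simp only [Function.comp]
    rw [Fin.prod_univ_succ]
    rfl

lemma piGeomHasSum : ∀ (n : ℕ) (r : Fin n → ℂ), (∀ l, ‖r l‖ < 1) →
    HasSum (fun c : Fin n → ℕ => ∏ l, r l ^ c l) (∏ l, (1 - r l)⁻¹) := by
  intro n
  induction n with
  | zero =>
    intro r _
    simpa using hasSum_fintype (fun c : Fin 0 → ℕ => ∏ l, r l ^ c l)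
  | succ n ih =>
    intro r h1
    have hg : HasSum (fun m : ℕ => r 0 ^ m) (1 - r 0)⁻¹ :=
      hasSum_geometric_of_norm_lt_one (h1 0)
    have hG := ih (fun l => r l.succ) (fun l => h1 _)
    have hsummable : Summable (fun p : ℕ × (Fin n → ℕ) =>
        r 0 ^ p.1 * ∏ l, r l.succ ^ p.2 l) := by
      apply Summable.of_norm
      have hnorm := ((summable_geometric_of_lt_one (norm_nonneg (r 0)) (h1 0)).mul_of_nonneg
        (piGeomSummableReal n (fun l => ‖r l.succ‖) (fun l => norm_nonneg _) (fun l => h1 _))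
        (fun m => pow_nonneg (norm_nonneg _) m)
        (fun c => Finset.prod_nonneg fun l _ => pow_nonneg (norm_nonneg _) _))
      refine hnorm.congr ?_
      intro p
      simp [norm_prod]
    have hmul := hg.mul hG hsummable
    have key : HasSum (fun c : Fin (n+1) → ℕ => ∏ l, r l ^ c l)
        ((1 - r 0)⁻¹ * ∏ l : Fin n, (1 - r l.succ)⁻¹) := by
      rw [← Equiv.hasSum_iff (Fin.consEquiv (fun _ : Fin (n+1) => ℕ))]
      refine hmul.congr ?_
      intro p
      refine Finset.sum_congr rfl fun q _ => ?_
      simp [Fin.prod_univ_succ, Fin.cons_succ]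
    rw [Fin.prod_univ_succ]
    exact key

lemma geomTupleHasSum (n : ℕ) (r : Fin n → ℂ) (h1 : ∀ l, ‖r l‖ < 1) :
    HasSum (fun m : ℕ => ∑ c ∈ Finset.Nat.antidiagonalTuple n m, ∏ l, r l ^ c l)
      (∏ l, (1 - r l)⁻¹) := by
  have h := piGeomHasSum n r h1
  rw [← Equiv.hasSum_iff (Finset.Nat.sigmaAntidiagonalTupleEquivTuple n)] at h
  refine h.sigma ?_
  intro m
  have e : (∑ c ∈ Finset.Nat.antidiagonalTuple n m, ∏ l, r l ^ c l)
      = ∑ c : {c // c ∈ Finset.Nat.antidiagonalTuple n m}, ∏ l, r l ^ (c : Fin n → ℕ) l :=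
    (Finset.sum_coe_sort (Finset.Nat.antidiagonalTuple n m)
      (fun c => ∏ l, r l ^ c l)).symm
  rw [e]
  exact hasSum_fintype _

/-- The complete homogeneous symmetric polynomial `h_m(x_1,…,x_n)`. -/
noncomputable def hsymm (n : ℕ) (x : Fin n → ℂ) (m : ℕ) : ℂ :=
  ∑ c ∈ Finset.Nat.antidiagonalTuple n m, ∏ i, x i ^ c i

theorem stmt18 (n : ℕ) (hn : 1 ≤ n) (x : Fin n → ℂ)
    (hx : Function.Injective x) (hx0 : ∀ i, x i ≠ 0)
    (z : ℂ) (hz : ∀ i j, ‖z * x i / x j‖ < 1) (i j : Fin n) :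
    HasSum
      (fun m : ℕ =>
        hsymm n (fun l => (x l)⁻¹) m * z ^ m *
          (((Matrix.vandermonde x)⁻¹ *
            Matrix.diagonal (fun α => x α ^ m) * Matrix.vandermonde x) i j))
      (((Matrix.vandermonde x)⁻¹ *
        Matrix.diagonal (fun α => (∏ l, (1 - z * x α * (x l)⁻¹))⁻¹) *
        Matrix.vandermonde x) i j) := by
  set A := (Matrix.vandermonde x)⁻¹ with hA
  set V := Matrix.vandermonde x with hV
  have hr : ∀ k l, ‖z * x k * (x l)⁻¹‖ < 1 := by
    intro k l
    have := hz k l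
    rwa [div_eq_mul_inv] at this
  have hk : ∀ k : Fin n, HasSum
      (fun m : ℕ => (A i k * V k j) *
        ∑ c ∈ Finset.Nat.antidiagonalTuple n m, ∏ l, (z * x k * (x l)⁻¹) ^ c l)
      ((A i k * V k j) * (∏ l, (1 - z * x k * (x l)⁻¹))⁻¹) := by
    intro k
    have := (geomTupleHasSum n (fun l => z * x k * (x l)⁻¹) (hr k)).mul_left (A i k * V k j)
    rwa [Finset.prod_inv_distrib] at this
  have hsum := hasSum_sum (fun k (_ : k ∈ Finset.univ) => hk k)
  have hm : ∀ (k : Fin n) (m : ℕ),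
      hsymm n (fun l => (x l)⁻¹) m * (z * x k) ^ m
        = ∑ c ∈ Finset.Nat.antidiagonalTuple n m, ∏ l, (z * x k * (x l)⁻¹) ^ c l := by
    intro k m
    rw [hsymm, Finset.sum_mul]
    refine Finset.sum_congr rfl fun c hc => ?_
    rw [Finset.Nat.mem_antidiagonalTuple] at hc
    rw [← hc, ← Finset.prod_pow_eq_pow_sum, ← Finset.prod_mul_distrib]
    refine Finset.prod_congr rfl fun l _ => ?_
    simp only [mul_pow, inv_pow]
    ring
  have entry : ∀ d : Fin n → ℂ, (A * Matrix.diagonal d * V) i j = ∑ k, A i k * (d k * V k j) := by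
    intro d
    rw [Matrix.mul_assoc, Matrix.mul_apply]
    simp [Matrix.diagonal_mul]
  have hfun : (fun m : ℕ => hsymm n (fun l => (x l)⁻¹) m * z ^ m *
        ((A * Matrix.diagonal (fun α => x α ^ m) * V) i j))
      = (fun m : ℕ => ∑ k, (A i k * V k j) *
        ∑ c ∈ Finset.Nat.antidiagonalTuple n m, ∏ l, (z * x k * (x l)⁻¹) ^ c l) := by
    funext m
    rw [entry, Finset.mul_sum]
    refine Finset.sum_congr rfl fun k _ => ?_
    rw [← hm k m, mul_pow]
    ring
  have hval : ((A * Matrix.diagonal (fun α => (∏ l, (1 - z * x α * (x l)⁻¹))⁻¹) * V) i j)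
      = ∑ k, (A i k * V k j) * (∏ l, (1 - z * x k * (x l)⁻¹))⁻¹ := by
    rw [entry]
    refine Finset.sum_congr rfl fun k _ => ?_
    ring
  rw [hfun, hval]
  exact hsum
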